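/- Let d ≥ 1 and let p, q be natural numbers with p < d. Then there is no map f : Fin(d+1) → ℝ^p × ℝ^q such that ⟨f(i) − f(j), f(i) − f(j)⟩_{p,q} = 1 for all i ≠ j, where ⟨(u⁺,u⁻),(v⁺,v⁻)⟩_{p,q} = ⟨u⁺,v⁺⟩ − ⟨u⁻,v⁻⟩ is the bilinear form of signature (p,q). In other words, the 1-skeleton of the standard d-dimensional simplex (with all squared edge lengths equal to 1) admits no simplicial isometric map into the Minkowski space ℝ^p_q with p < d. -/

import Mathlib

/-!
Put `v i = f (i + 1) - f 0`. Polarization turns the unit squared edge lengths into the Gram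
matrix `B (v i) (v j) = (1 + δᵢⱼ) / 2`, which is positive definite: for `w = ∑ cᵢ vᵢ` one gets
`B w w = ((∑ cᵢ)² + ∑ cᵢ²) / 2`. Since the form is negative semidefinite on the kernel of the
projection to `ℝ^p`, the projections of the `d` vectors `vᵢ` to `ℝ^p` are linearly independent,
so `d ≤ p`.
-/

/-- The indefinite bilinear form of signature `(p, q)` on `ℝ^p × ℝ^q`. -/
noncomputable def mformPQ (p q : ℕ)
    (u v : EuclideanSpace ℝ (Fin p) × EuclideanSpace ℝ (Fin q)) : ℝ :=
  inner ℝ u.1 v.1 - inner ℝ u.2 v.2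

open Finset LinearMap

theorem sum_sum_mul_mul_ite_one_half {ι : Type*} [Fintype ι] [DecidableEq ι] (c : ι → ℝ) :
    ∑ i, ∑ j, c i * c j * (if i = j then 1 else 1 / 2 : ℝ)
      = ((∑ i, c i) ^ 2 + ∑ i, c i ^ 2) / 2 := by
  have hsplit : ∀ i j, c i * c j * (if i = j then 1 else 1 / 2 : ℝ)
      = c i * c j / 2 + if i = j then c i * c j / 2 else 0 := by
    intro i j
    split_ifs <;> ring
  simp only [hsplit, sum_add_distrib, sum_ite_eq, mem_univ, if_true, sq, sum_mul_sum, ← sum_div]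
  ring

namespace LinearMap.BilinForm

variable {M N : Type*} [AddCommGroup M] [Module ℝ M] [AddCommGroup N] [Module ℝ N]
  {B : LinearMap.BilinForm ℝ M}

theorem apply_sum_smul_sum_smul {ι : Type*} [Fintype ι] (B : LinearMap.BilinForm ℝ M) (c : ι → ℝ)
    (v : ι → M) :
    B (∑ i, c i • v i) (∑ i, c i • v i) = ∑ i, ∑ j, c i * c j * B (v i) (v j) := by
  simp_rw [sum_left, smul_left, sum_right, smul_right, Finset.mul_sum, mul_assoc]

theorem IsSymm.apply_sub_sub_of_apply_sub_self_eq_one {ι : Type*} [DecidableEq ι]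
    (hB : B.IsSymm) {f : ι → M} (hf : ∀ i j, i ≠ j → B (f i - f j) (f i - f j) = 1)
    {i j k : ι} (hik : i ≠ k) (hjk : j ≠ k) :
    B (f i - f k) (f j - f k) = if i = j then 1 else 1 / 2 := by
  split_ifs with hij
  · subst hij
    exact hf i k hik
  · have hpolar : B (f i - f j) (f i - f j)
        = B (f i - f k) (f i - f k) + B (f j - f k) (f j - f k)
          - 2 * B (f i - f k) (f j - f k) := by
      rw [show f i - f j = (f i - f k) - (f j - f k) by abel]
      generalize f i - f k = x, f j - f k = y
      simp only [map_sub, LinearMap.sub_apply, hB.eq y x]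
      ring
    rw [hf i j hij, hf i k hik, hf j k hjk] at hpolar
    linarith

theorem IsSymm.linearIndependent_map_sub_of_apply_sub_self_eq_one (hB : B.IsSymm)
    (π : M →ₗ[ℝ] N) (hπ : ∀ x, π x = 0 → B x x ≤ 0) {d : ℕ} {f : Fin (d + 1) → M}
    (hf : ∀ i j, i ≠ j → B (f i - f j) (f i - f j) = 1) :
    LinearIndependent ℝ (fun i : Fin d => π (f i.succ - f 0)) := by
  rw [Fintype.linearIndependent_iff]
  intro c hc
  set w := ∑ i, c i • (f i.succ - f 0)
  have hgram : ∀ i j : Fin d,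
      B (f i.succ - f 0) (f j.succ - f 0) = if i = j then 1 else 1 / 2 := by
    intro i j
    simpa only [Fin.succ_inj] using
      hB.apply_sub_sub_of_apply_sub_self_eq_one hf (Fin.succ_ne_zero i) (Fin.succ_ne_zero j)
  have hw : B w w = ((∑ i, c i) ^ 2 + ∑ i, c i ^ 2) / 2 := by
    simp only [w, apply_sum_smul_sum_smul, hgram, sum_sum_mul_mul_ite_one_half]
  have hw_nonpos : B w w ≤ 0 := hπ w (by simpa [w] using hc)
  have hsq : ∑ i, c i ^ 2 = 0 := by
    nlinarith [sq_nonneg (∑ i, c i), sum_nonneg fun i (_ : i ∈ univ) => sq_nonneg (c i)]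
  intro i
  simpa using (sum_eq_zero_iff_of_nonneg fun i _ => sq_nonneg (c i)).1 hsq i (mem_univ i)

end LinearMap.BilinForm

noncomputable def mformPQBilin (p q : ℕ) :
    LinearMap.BilinForm ℝ (EuclideanSpace ℝ (Fin p) × EuclideanSpace ℝ (Fin q)) :=
  (innerₗ _).compl₁₂ (fst ℝ _ _) (fst ℝ _ _) - (innerₗ _).compl₁₂ (snd ℝ _ _) (snd ℝ _ _)

theorem mformPQBilin_apply (p q : ℕ) (u v : EuclideanSpace ℝ (Fin p) × EuclideanSpace ℝ (Fin q)) :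
    mformPQBilin p q u v = mformPQ p q u v :=
  rfl

theorem mformPQBilin_isSymm (p q : ℕ) : (mformPQBilin p q).IsSymm :=
  ⟨fun u v => by simp only [mformPQBilin_apply, mformPQ, real_inner_comm]⟩

theorem mformPQ_self_nonpos_of_fst_eq_zero {p q : ℕ}
    {u : EuclideanSpace ℝ (Fin p) × EuclideanSpace ℝ (Fin q)} (hu : u.1 = 0) :
    mformPQ p q u u ≤ 0 := by
  simp [mformPQ, hu]

theorem no_isometric_map_of_simplex_skeleton_general (d p q : ℕ) (hp : p < d) :
    ¬ ∃ f : Fin (d + 1) → EuclideanSpace ℝ (Fin p) × EuclideanSpace ℝ (Fin q),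
      ∀ i j : Fin (d + 1), i ≠ j → mformPQ p q (f i - f j) (f i - f j) = 1 := by
  rintro ⟨f, hf⟩
  have hli := (mformPQBilin_isSymm p q).linearIndependent_map_sub_of_apply_sub_self_eq_one
    (fst ℝ _ _) (fun _ => mformPQ_self_nonpos_of_fst_eq_zero) hf
  have hdp : d ≤ p := by simpa using hli.fintype_card_le_finrank
  omega

/-- optimality of the target dimension.  For `p < d` there is no map
of the vertices of the standard `d`-simplex into `ℝ^p_q` in which all the squared edge
lengths equal `1`. -/
theorem no_isometric_map_of_simplex_skeleton (d p q : ℕ) (hd : 1 ≤ d) (hp : p < d) :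
    ¬ ∃ f : Fin (d + 1) → EuclideanSpace ℝ (Fin p) × EuclideanSpace ℝ (Fin q),
      ∀ i j : Fin (d + 1), i ≠ j → mformPQ p q (f i - f j) (f i - f j) = 1 :=
  no_isometric_map_of_simplex_skeleton_general d p q hp
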